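/- arXiv:2207.05046 — 3 statements merged into one kernel-verified Lean document; each statement's English description precedes it below -/
import Mathlib

section
/- Fix β > 0, p ∈ (1/2,1], and t ∈ (-1/2, ∞). Let f_t(x) = √(1+2t)·x^t on (0,1] and let T_κ be the integral operator with kernel κ(x,y) = β·max{x,y}^(-(2p-1)/p). Then ‖f_t‖₂ = 1 and ‖T_κ f_t‖₂² = β²·(1+2t)(2t²+7t+4+1/p) / ((1+t)²·(t+1/p)·(2t+2/p-1)). In particular, ‖T_κ‖ ≥ β·sup_{t>-1/2} √((1+2t)(2t²+7t+4+1/p)/((1+t)²(t+1/p)(2t+2/p-1))). -/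
/-!
For `x ∈ (0,1]` the kernel splits at `y = x`: with `a = 1/p - 2` and `s = a + t + 1`,
`∫₀¹ max(x,y)^a y^t dy = x^s/(t+1) + ∫ₓ¹ y^(s-1) dy`, and the tail is `(1 - x^s)/s`, or `-log x`
when `s = 0`. So `(T_κ f_t)²` is a combination of `x^(2s)`, `x^s`, `1` (resp. of `1`, `-log x`,
`log² x`), whose integrals over `(0,1]` are elementary (resp. `∫₀¹ (-log x)^k = k!`, the Gamma
integral after `x = e^(-u)`), and both cases give the same rational function of `s` and `t`.
Since `f_t ≥ 0` has unit norm, any bound `C` on the operator norm dominates `‖T_κ f_t‖₂`.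
-/

open MeasureTheory Set Real

lemma image_exp_neg_Ioi_zero : (fun u : ℝ => exp (-u)) '' Ioi 0 = Ioo 0 1 := by
  ext x
  constructor
  · rintro ⟨u, hu, rfl⟩
    exact ⟨exp_pos _, exp_lt_one_iff.2 (neg_lt_zero.2 hu)⟩
  · rintro ⟨hx0, hx1⟩
    exact ⟨-log x, neg_pos.2 (log_neg hx0 hx1), by simp [exp_log hx0]⟩

section NegLogSubstitution

variable (g : ℝ → ℝ)

private lemma hasDerivWithinAt_exp_neg (u : ℝ) :
    HasDerivWithinAt (fun u : ℝ => exp (-u)) (-exp (-u)) (Ioi 0) u := by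
  simpa using ((hasDerivAt_neg u).exp).hasDerivWithinAt

private lemma injOn_exp_neg : InjOn (fun u : ℝ => exp (-u)) (Ioi 0) :=
  fun _ _ _ _ h => neg_inj.1 (exp_injective h)

lemma integral_comp_neg_log_Ioo :
    ∫ x in Ioo 0 1, g (-log x) = ∫ u in Ioi 0, exp (-u) * g u := by
  rw [← image_exp_neg_Ioi_zero, integral_image_eq_integral_abs_deriv_smul measurableSet_Ioi
    (fun u _ => hasDerivWithinAt_exp_neg u) injOn_exp_neg]
  simp [abs_of_pos (exp_pos _)]

lemma integrableOn_comp_neg_log_Ioo_iff :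
    IntegrableOn (fun x => g (-log x)) (Ioo 0 1) ↔
      IntegrableOn (fun u => exp (-u) * g u) (Ioi 0) := by
  rw [← image_exp_neg_Ioi_zero, integrableOn_image_iff_integrableOn_abs_deriv_smul
    measurableSet_Ioi (fun u _ => hasDerivWithinAt_exp_neg u) injOn_exp_neg]
  simp [abs_of_pos (exp_pos _)]

end NegLogSubstitution

lemma integrableOn_neg_log_pow (k : ℕ) : IntegrableOn (fun x => (-log x) ^ k) (Ioc 0 1) := by
  rw [integrableOn_Ioc_iff_integrableOn_Ioo,
    integrableOn_comp_neg_log_Ioo_iff (fun u => u ^ k)]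
  simpa using GammaIntegral_convergent (s := k + 1) (by positivity)

lemma integral_neg_log_pow (k : ℕ) : ∫ x in Ioc 0 1, (-log x) ^ k = k.factorial := by
  rw [integral_Ioc_eq_integral_Ioo, integral_comp_neg_log_Ioo (fun u => u ^ k),
    ← Gamma_nat_eq_factorial, Gamma_eq_integral (by positivity)]
  simp

lemma integral_sq_const_sub_log (c : ℝ) :
    ∫ x in Ioc 0 1, (c - log x) ^ 2 = c ^ 2 + 2 * c + 2 := by
  have hexpand (x : ℝ) : (c - log x) ^ 2 = (c ^ 2 + 2 * c * (-log x) ^ 1) + (-log x) ^ 2 := by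
    ring
  have hconst : IntegrableOn (fun _ => c ^ 2) (Ioc (0:ℝ) 1) :=
    integrableOn_const measure_Ioc_lt_top.ne
  have hlog := (integrableOn_neg_log_pow 1).const_mul (2 * c)
  simp_rw [hexpand]
  rw [integral_add, integral_add, integral_const_mul, integral_neg_log_pow, integral_neg_log_pow,
    setIntegral_const]
  · norm_num
  exacts [hconst, hlog, hconst.add hlog, integrableOn_neg_log_pow 2]

lemma integral_rpow_Ioc_zero_one {r : ℝ} (hr : -1 < r) :
    ∫ x in Ioc 0 1, x ^ r = (r + 1)⁻¹ := by
  rw [← intervalIntegral.integral_of_le zero_le_one, integral_rpow (Or.inl hr),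
    one_rpow, zero_rpow (by linarith)]
  ring

lemma integrableOn_rpow_Ioc_zero {r x : ℝ} (hr : -1 < r) (hx : 0 ≤ x) :
    IntegrableOn (fun y => y ^ r) (Ioc 0 x) :=
  (intervalIntegrable_iff_integrableOn_Ioc_of_le hx).1
    (intervalIntegral.intervalIntegrable_rpow' hr)

lemma integral_sq_mul_rpow_add_const (a b : ℝ) {s : ℝ} (hs : -(1 / 2) < s) :
    ∫ x in Ioc 0 1, (a * x ^ s + b) ^ 2 = a ^ 2 / (2 * s + 1) + 2 * a * b / (s + 1) + b ^ 2 := by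
  have hexpand : EqOn (fun x => (a * x ^ s + b) ^ 2)
      (fun x => (a ^ 2 * x ^ (2 * s) + 2 * a * b * x ^ s) + b ^ 2) (Ioc 0 1) := by
    intro x hx
    simp only [mul_comm 2 s, rpow_mul hx.1.le, rpow_two]
    ring
  have h2s := (integrableOn_rpow_Ioc_zero (r := 2 * s) (by linarith) zero_le_one).const_mul (a ^ 2)
  have hs' := (integrableOn_rpow_Ioc_zero (r := s) (by linarith) zero_le_one).const_mul (2 * a * b)
  rw [setIntegral_congr_fun measurableSet_Ioc hexpand, integral_add, integral_add,
    integral_const_mul, integral_const_mul, integral_rpow_Ioc_zero_one (by linarith),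
    integral_rpow_Ioc_zero_one (by linarith), setIntegral_const]
  · simp [div_eq_mul_inv]
  exacts [h2s, hs', h2s.add hs', integrableOn_const measure_Ioc_lt_top.ne]

lemma integral_Ioc_rpow {r x : ℝ} (hx : x ∈ Ioc 0 1) (hr : r ≠ -1) :
    ∫ y in Ioc x 1, y ^ r = (1 - x ^ (r + 1)) / (r + 1) := by
  rw [← intervalIntegral.integral_of_le hx.2,
    integral_rpow (Or.inr ⟨hr, notMem_uIcc_of_lt hx.1 one_pos⟩), one_rpow]

lemma integral_Ioc_rpow_neg_one {x : ℝ} (hx : x ∈ Ioc 0 1) :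
    ∫ y in Ioc x 1, y ^ (-1 : ℝ) = -log x := by
  simp_rw [rpow_neg_one]
  rw [← intervalIntegral.integral_of_le hx.2, integral_inv (notMem_uIcc_of_lt hx.1 one_pos),
    one_div, log_inv]

lemma integral_sq_mul_rpow_add_integral_rpow (c : ℝ) {r : ℝ} (hr : -(3 / 2) < r) :
    ∫ x in Ioc 0 1, (c * x ^ (r + 1) + ∫ y in Ioc x 1, y ^ r) ^ 2 =
      c ^ 2 / (2 * r + 3) + 2 * (c + 1) / ((r + 2) * (2 * r + 3)) := by
  rcases eq_or_ne r (-1) with rfl | hr1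
  · have hlog : EqOn (fun x => (c * x ^ (-1 + 1 : ℝ) + ∫ y in Ioc x 1, y ^ (-1 : ℝ)) ^ 2)
        (fun x => (c - log x) ^ 2) (Ioc 0 1) := fun x hx => by
      simp only [integral_Ioc_rpow_neg_one hx]
      norm_num [sub_eq_add_neg]
    rw [setIntegral_congr_fun measurableSet_Ioc hlog, integral_sq_const_sub_log]
    ring
  · have hr1' : r + 1 ≠ 0 := fun h => hr1 (by linarith)
    have hpow : EqOn (fun x => (c * x ^ (r + 1) + ∫ y in Ioc x 1, y ^ r) ^ 2)
        (fun x => ((c - (r + 1)⁻¹) * x ^ (r + 1) + (r + 1)⁻¹) ^ 2) (Ioc 0 1) := fun x hx => by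
      simp only [integral_Ioc_rpow hx hr1]
      field_simp
      ring
    rw [setIntegral_congr_fun measurableSet_Ioc hpow,
      integral_sq_mul_rpow_add_const _ _ (by linarith),
      show 2 * (r + 1) + 1 = 2 * r + 3 by ring, show r + 1 + 1 = r + 2 by ring]
    have hr2 : r + 2 ≠ 0 := by linarith
    -- stated in the normal form `field_simp` rewrites `2 * r + 3` to
    have hr3 : r * 2 + 3 ≠ 0 := by linarith
    field_simp
    ring

lemma integral_max_rpow_mul_rpow {a t x : ℝ} (ht : -1 < t) (hx : x ∈ Ioc 0 1) :
    ∫ y in Ioc 0 1, max x y ^ a * y ^ t =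
      (t + 1)⁻¹ * x ^ (a + t + 1) + ∫ y in Ioc x 1, y ^ (a + t) := by
  obtain ⟨hx0, hx1⟩ := hx
  have hleft : EqOn (fun y => max x y ^ a * y ^ t) (fun y => x ^ a * y ^ t) (Ioc 0 x) :=
    fun y hy => by simp only [max_eq_left hy.2]
  have hright : EqOn (fun y => max x y ^ a * y ^ t) (fun y => y ^ (a + t)) (Ioc x 1) :=
    fun y hy => by simp only [max_eq_right hy.1.le, rpow_add (hx0.trans hy.1)]
  have hint_left : ∫ y in Ioc 0 x, y ^ t = x ^ (t + 1) / (t + 1) := by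
    rw [← intervalIntegral.integral_of_le hx0.le, integral_rpow (Or.inl ht),
      zero_rpow (by linarith), sub_zero]
  have hintegrable_right : IntegrableOn (fun y => y ^ (a + t)) (Ioc x 1) :=
    (intervalIntegrable_iff_integrableOn_Ioc_of_le hx1).1
      (intervalIntegral.intervalIntegrable_rpow (Or.inr (notMem_uIcc_of_lt hx0 one_pos)))
  rw [← Ioc_union_Ioc_eq_Ioc hx0.le hx1, setIntegral_union (Ioc_disjoint_Ioc_of_le le_rfl)
      measurableSet_Ioc
      (IntegrableOn.congr_fun ((integrableOn_rpow_Ioc_zero ht hx0.le).const_mul _) hleft.symm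
        measurableSet_Ioc)
      (hintegrable_right.congr_fun hright.symm measurableSet_Ioc),
    setIntegral_congr_fun measurableSet_Ioc hleft, setIntegral_congr_fun measurableSet_Ioc hright,
    integral_const_mul, hint_left, add_assoc a t 1, rpow_add hx0 a (t + 1)]
  ring

lemma integral_sq_integral_max_rpow_mul_rpow {q t : ℝ} (ht : -1 < t) (hqt : 1 / 2 < t + q) :
    ∫ x in Ioc 0 1, (∫ y in Ioc 0 1, max x y ^ (q - 2) * y ^ t) ^ 2 =
      (2 * t ^ 2 + 7 * t + 4 + q) / ((1 + t) ^ 2 * (t + q) * (2 * t + 2 * q - 1)) := by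
  have hinner : EqOn (fun x => (∫ y in Ioc 0 1, max x y ^ (q - 2) * y ^ t) ^ 2)
      (fun x => ((t + 1)⁻¹ * x ^ (q - 2 + t + 1) + ∫ y in Ioc x 1, y ^ (q - 2 + t)) ^ 2)
      (Ioc 0 1) := fun x hx => by
    simp only [integral_max_rpow_mul_rpow ht hx]
  rw [setIntegral_congr_fun measurableSet_Ioc hinner,
    integral_sq_mul_rpow_add_integral_rpow _ (by linarith),
    show 2 * (q - 2 + t) + 3 = 2 * t + 2 * q - 1 by ring, show q - 2 + t + 2 = t + q by ring,
    add_comm t 1]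
  have h1 : 1 + t ≠ 0 := by linarith
  have h2 : t + q ≠ 0 := by linarith
  have h3 : 2 * t + 2 * q - 1 ≠ 0 := by linarith
  generalize 2 * t + 2 * q - 1 = D at h3 ⊢
  field_simp
  ring

lemma integral_sq_sqrt_mul_rpow {t : ℝ} (ht : -(1 / 2) < t) :
    ∫ x in Ioc 0 1, (√(1 + 2 * t) * x ^ t) ^ 2 = 1 := by
  have h := integral_sq_mul_rpow_add_const √(1 + 2 * t) 0 ht
  simp only [add_zero, mul_zero, zero_div, ne_eq, OfNat.ofNat_ne_zero, not_false_eq_true,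
    zero_pow] at h
  rw [h, sq_sqrt (by linarith), add_comm 1, div_self (by linarith)]

lemma sqrt_integral_sq_le_of_nonneg_on_Ioc {K : ℝ → ℝ → ℝ} {C : ℝ}
    (hC : ∀ f : ℝ → ℝ, Measurable f → (∀ x, 0 ≤ f x) →
      (∫ x in Ioc (0:ℝ) 1, f x ^ 2) ≤ 1 →
      √(∫ x in Ioc (0:ℝ) 1, (∫ y in Ioc (0:ℝ) 1, K x y * f y) ^ 2) ≤ C)
    {g : ℝ → ℝ} (hg : Measurable g) (hg_nonneg : ∀ x ∈ Ioc (0:ℝ) 1, 0 ≤ g x)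
    (hg_norm : ∫ x in Ioc (0:ℝ) 1, g x ^ 2 ≤ 1) :
    √(∫ x in Ioc (0:ℝ) 1, (∫ y in Ioc (0:ℝ) 1, K x y * g y) ^ 2) ≤ C := by
  set f := (Ioc (0:ℝ) 1).indicator g
  have hfg : EqOn f g (Ioc 0 1) := fun x hx => indicator_of_mem hx g
  have hf_norm : ∫ x in Ioc (0:ℝ) 1, f x ^ 2 = ∫ x in Ioc (0:ℝ) 1, g x ^ 2 :=
    setIntegral_congr_fun measurableSet_Ioc fun x hx => by simp only [hfg hx]
  have hf_image (x : ℝ) :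
      ∫ y in Ioc (0:ℝ) 1, K x y * f y = ∫ y in Ioc (0:ℝ) 1, K x y * g y :=
    setIntegral_congr_fun measurableSet_Ioc fun y hy => by simp only [hfg hy]
  simpa only [hf_image] using
    hC f (hg.indicator measurableSet_Ioc) (indicator_nonneg hg_nonneg) (hf_norm ▸ hg_norm)

theorem kernel_operator_norm_lower_bound_general (β p t : ℝ)
    (hp : p ∈ Set.Ioc (1/2 : ℝ) 1) (ht : t ∈ Set.Ioi (-(1/2) : ℝ)) :
    (∫ x in Set.Ioc (0:ℝ) 1, (Real.sqrt (1 + 2 * t) * x ^ t) ^ 2) = 1 ∧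
    (∫ x in Set.Ioc (0:ℝ) 1,
        (∫ y in Set.Ioc (0:ℝ) 1,
          β * max x y ^ (-(2 * p - 1) / p) * (Real.sqrt (1 + 2 * t) * y ^ t)) ^ 2) =
      β ^ 2 * ((1 + 2 * t) * (2 * t ^ 2 + 7 * t + 4 + 1 / p) /
        ((1 + t) ^ 2 * (t + 1 / p) * (2 * t + 2 / p - 1))) ∧
    ∀ C : ℝ,
      (∀ f : ℝ → ℝ, Measurable f → (∀ x, 0 ≤ f x) →
        (∫ x in Set.Ioc (0:ℝ) 1, f x ^ 2) ≤ 1 →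
        Real.sqrt (∫ x in Set.Ioc (0:ℝ) 1,
          (∫ y in Set.Ioc (0:ℝ) 1, β * max x y ^ (-(2 * p - 1) / p) * f y) ^ 2) ≤ C) →
      β * Real.sqrt ((1 + 2 * t) * (2 * t ^ 2 + 7 * t + 4 + 1 / p) /
        ((1 + t) ^ 2 * (t + 1 / p) * (2 * t + 2 / p - 1))) ≤ C := by
  obtain ⟨hp_gt, hp_le⟩ := hp
  have ht' : -(1 / 2) < t := ht
  have hp0 : 0 < p := by linarith
  have hexp : -(2 * p - 1) / p = 1 / p - 2 := by field_simp; ring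
  have hpull (x y : ℝ) : β * max x y ^ (1 / p - 2) * (√(1 + 2 * t) * y ^ t) =
      (β * √(1 + 2 * t)) * (max x y ^ (1 / p - 2) * y ^ t) := by ring
  have himage : ∫ x in Ioc (0:ℝ) 1, (∫ y in Ioc (0:ℝ) 1,
        β * max x y ^ (-(2 * p - 1) / p) * (√(1 + 2 * t) * y ^ t)) ^ 2 =
      β ^ 2 * ((1 + 2 * t) * (2 * t ^ 2 + 7 * t + 4 + 1 / p) /
        ((1 + t) ^ 2 * (t + 1 / p) * (2 * t + 2 / p - 1))) := by
    have hqt : 1 / 2 < t + 1 / p := by linarith [(one_le_div hp0).2 hp_le]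
    simp_rw [hexp, hpull, integral_const_mul, mul_pow, integral_const_mul,
      integral_sq_integral_max_rpow_mul_rpow (by linarith) hqt,
      sq_sqrt (by linarith : 0 ≤ 1 + 2 * t)]
    ring
  refine ⟨integral_sq_sqrt_mul_rpow ht', himage, fun C hC => ?_⟩
  have hbound := sqrt_integral_sq_le_of_nonneg_on_Ioc hC (g := fun x => √(1 + 2 * t) * x ^ t)
    (by fun_prop) (fun x hx => mul_nonneg (sqrt_nonneg _) (rpow_nonneg hx.1.le _))
    (integral_sq_sqrt_mul_rpow ht').le
  rw [himage] at hbound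
  calc β * √(_) ≤ |β| * √(_) := mul_le_mul_of_nonneg_right (le_abs_self β) (sqrt_nonneg _)
    _ = _ := by rw [sqrt_mul (sq_nonneg β), sqrt_sq_eq_abs]
    _ ≤ C := hbound

/-- for `f_t(x) = √(1+2t)·x^t` on `(0,1]` and the integral operator with
kernel `κ(x,y) = β·max{x,y}^(-(2p-1)/p)`, we have `‖f_t‖₂ = 1` and
`‖T_κ f_t‖₂² = β²·(1+2t)(2t²+7t+4+1/p)/((1+t)²(t+1/p)(2t+2/p-1))`.
In particular, any upper bound `C` for the operator norm of `T_κ` over non-negative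
functions of `L²`-norm at most `1` satisfies
`C ≥ β·√((1+2t)(2t²+7t+4+1/p)/((1+t)²(t+1/p)(2t+2/p-1)))` for every `t > -1/2`. -/
theorem kernel_operator_norm_lower_bound (β p t : ℝ) (hβ : 0 < β)
    (hp : p ∈ Set.Ioc (1/2 : ℝ) 1) (ht : t ∈ Set.Ioi (-(1/2) : ℝ)) :
    (∫ x in Set.Ioc (0:ℝ) 1, (Real.sqrt (1 + 2 * t) * x ^ t) ^ 2) = 1 ∧
    (∫ x in Set.Ioc (0:ℝ) 1,
        (∫ y in Set.Ioc (0:ℝ) 1,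
          β * max x y ^ (-(2 * p - 1) / p) * (Real.sqrt (1 + 2 * t) * y ^ t)) ^ 2) =
      β ^ 2 * ((1 + 2 * t) * (2 * t ^ 2 + 7 * t + 4 + 1 / p) /
        ((1 + t) ^ 2 * (t + 1 / p) * (2 * t + 2 / p - 1))) ∧
    ∀ C : ℝ,
      (∀ f : ℝ → ℝ, Measurable f → (∀ x, 0 ≤ f x) →
        (∫ x in Set.Ioc (0:ℝ) 1, f x ^ 2) ≤ 1 →
        Real.sqrt (∫ x in Set.Ioc (0:ℝ) 1,
          (∫ y in Set.Ioc (0:ℝ) 1, β * max x y ^ (-(2 * p - 1) / p) * f y) ^ 2) ≤ C) →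
      β * Real.sqrt ((1 + 2 * t) * (2 * t ^ 2 + 7 * t + 4 + 1 / p) /
        ((1 + t) ^ 2 * (t + 1 / p) * (2 * t + 2 / p - 1))) ≤ C :=
  kernel_operator_norm_lower_bound_general β p t hp ht
end

section
/- Let (I_j)_{j∈J} be a finite family of independent Bernoulli random variables with P(I_j = 1) = λ_j, and (P_j)_{j∈J} an independent family of Poisson random variables with E[P_j] = λ_j, where all λ_j ∈ (0,1). Then there exists a coupling of the two families such that P(∃ j ∈ J : I_j ≠ P_j) ≤ 2·Σ_{j∈J} λ_j². -/
/-!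
Take `N ~ Poisson(p)` and an independent coin that shows `false` with probability
`(1 - p) e^p ≤ 1`, and let `I = 0` exactly when `N = 0` and the coin shows `false`.
Then `P(I = 0) = e^{-p} (1 - p) e^p = 1 - p`, so `I ~ Bernoulli(p)`, and `I = N` on
`{N = 0, coin false} ∪ {N = 1}`, an event of probability `1 - p + p e^{-p}`. Hence
`P(I ≠ N) = p (1 - e^{-p}) ≤ p²`. Coupling the coordinates of the two families
independently in this way, a union bound over `j` gives `P(∃ j, I_j ≠ P_j) ≤ ∑ λ_j²`.
-/

open MeasureTheory ProbabilityTheory unitInterval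
open scoped NNReal ENNReal

namespace MeasureTheory.Measure

lemma ext_of_apply_singleton_false {μ ν : Measure Bool}
    [IsProbabilityMeasure μ] [IsProbabilityMeasure ν] (h : μ {false} = ν {false}) : μ = ν := by
  refine ext_iff_singleton.mpr fun b ↦ ?_
  cases b
  · exact h
  · rw [← Bool.not_false, ← Bool.compl_singleton, prob_compl_eq_one_sub (.singleton _),
      prob_compl_eq_one_sub (.singleton _), h]

section PiCoupling

variable {ι α β : Type*} [Fintype ι] [MeasurableSpace α] [MeasurableSpace β]

noncomputable def piCoupling (γ : ι → Measure (α × β)) : Measure ((ι → α) × (ι → β)) :=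
  (Measure.pi γ).map (MeasurableEquiv.arrowProdEquivProdArrow α β ι)

variable (γ : ι → Measure (α × β)) [∀ i, IsProbabilityMeasure (γ i)]

instance : IsProbabilityMeasure (piCoupling γ) :=
  isProbabilityMeasure_map (MeasurableEquiv.measurable _).aemeasurable

lemma piCoupling_map_fst :
    (piCoupling γ).map Prod.fst = Measure.pi fun i ↦ (γ i).map Prod.fst := by
  rw [piCoupling, map_map measurable_fst (MeasurableEquiv.measurable _)]
  exact pi_map_pi fun _ ↦ measurable_fst.aemeasurable

lemma piCoupling_map_snd :
    (piCoupling γ).map Prod.snd = Measure.pi fun i ↦ (γ i).map Prod.snd := by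
  rw [piCoupling, map_map measurable_snd (MeasurableEquiv.measurable _)]
  exact pi_map_pi fun _ ↦ measurable_snd.aemeasurable

lemma piCoupling_exists_mem_le_sum (s : ι → Set (α × β)) :
    piCoupling γ {q | ∃ i, (q.1 i, q.2 i) ∈ s i} ≤ ∑ i, γ i (s i) := by
  have hpre : MeasurableEquiv.arrowProdEquivProdArrow α β ι ⁻¹' {q | ∃ i, (q.1 i, q.2 i) ∈ s i} =
      ⋃ i, Function.eval i ⁻¹' s i := by
    ext x
    simp [MeasurableEquiv.arrowProdEquivProdArrow, Equiv.arrowProdEquivProdArrow]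
  rw [piCoupling, MeasurableEquiv.map_apply, hpre]
  calc _ ≤ ∑ i, Measure.pi γ (Function.eval i ⁻¹' s i) := measure_iUnion_fintype_le _ _
    _ ≤ ∑ i, γ i (s i) := Finset.sum_le_sum fun i _ ↦ by
        simpa only [(measurePreserving_eval γ i).map_eq] using
          le_map_apply (μ := Measure.pi γ) (measurable_pi_apply i).aemeasurable (s i)

end PiCoupling

end MeasureTheory.Measure

set_option linter.deprecated false in
lemma PMF.toMeasure_map_bernoulli {β : Type*} [MeasurableSpace β] [MeasurableSingletonClass β]
    (f : Bool → β) (p : ℝ≥0) (h : p ≤ 1) :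
    ((PMF.bernoulli p h).map f).toMeasure =
      Ber(f true, f false, ⟨p, p.2, NNReal.coe_le_one.2 h⟩) := by
  rw [← PMF.toMeasure_map _ _ .of_discrete, ← map_bernoulliMeasure]
  congr 1
  refine Measure.ext_of_apply_singleton_false ?_
  rw [PMF.toMeasure_apply_singleton _ _ (.singleton _), PMF.bernoulli_apply,
    bernoulliMeasure_apply_of_notMem_of_mem _ (.singleton _) (by simp) rfl]
  congr 1
  ext
  simp [NNReal.coe_sub h]

lemma Real.one_sub_mul_exp_le_one (x : ℝ) : (1 - x) * exp x ≤ 1 := by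
  calc (1 - x) * exp x ≤ exp (-x) * exp x := by
        gcongr
        exact one_sub_le_exp_neg x
    _ = 1 := by rw [← exp_add, neg_add_cancel, exp_zero]

namespace ProbabilityTheory

noncomputable def stayProb (p : I) : I :=
  ⟨(1 - p) * Real.exp p, mul_nonneg (sub_nonneg.2 p.2.2) (Real.exp_pos _).le,
    Real.one_sub_mul_exp_le_one p⟩

lemma exp_neg_mul_stayProb (p : I) : Real.exp (-p) * stayProb p = 1 - p := by
  change Real.exp (-p) * ((1 - p) * Real.exp p) = 1 - p
  rw [mul_left_comm, ← Real.exp_add, neg_add_cancel, Real.exp_zero, mul_one]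

noncomputable def bernoulliPoissonCoupling (p : I) : Measure (ℕ × ℕ) :=
  ((poissonMeasure (toNNReal p)).prod Ber(false, true, stayProb p)).map
    fun x ↦ ((decide (x.1 ≠ 0) || x.2).toNat, x.1)

instance (p : I) : IsProbabilityMeasure (bernoulliPoissonCoupling p) :=
  Measure.isProbabilityMeasure_map Measurable.of_discrete.aemeasurable

lemma map_snd_bernoulliPoissonCoupling (p : I) :
    (bernoulliPoissonCoupling p).map Prod.snd = poissonMeasure (toNNReal p) := by
  rw [bernoulliPoissonCoupling, Measure.map_map measurable_snd .of_discrete]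
  exact Measure.map_fst_prod.trans (by simp)

lemma map_fst_bernoulliPoissonCoupling (p : I) :
    (bernoulliPoissonCoupling p).map Prod.fst = Ber(1, 0, p) := by
  set μ := (poissonMeasure (toNNReal p)).prod Ber(false, true, stayProb p)
  set b : ℕ × Bool → Bool := fun x ↦ decide (x.1 ≠ 0) || x.2
  have : IsProbabilityMeasure (μ.map b) := Measure.isProbabilityMeasure_map .of_discrete
  have hb : μ.map b = Ber(true, false, p) := by
    refine Measure.ext_of_apply_singleton_false <| (measureReal_eq_measureReal_iff).mp ?_
    have hpre : b ⁻¹' {false} = {0} ×ˢ {false} := by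
      ext ⟨n, c⟩
      simp [b]
    rw [map_measureReal_apply .of_discrete (.singleton _), hpre, measureReal_prod_prod,
      poissonMeasure_real_singleton,
      bernoulliMeasure_real_apply_of_mem_of_notMem _ (.singleton _) rfl (by simp),
      bernoulliMeasure_real_apply_of_notMem_of_mem _ (.singleton _) (by simp) rfl,
      ← exp_neg_mul_stayProb]
    simp
  rw [bernoulliPoissonCoupling, Measure.map_map measurable_fst .of_discrete]
  change μ.map (Bool.toNat ∘ b) = _
  rw [← Measure.map_map .of_discrete .of_discrete, hb, map_bernoulliMeasure]
  rfl

lemma bernoulliPoissonCoupling_setOf_ne_le (p : I) :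
    bernoulliPoissonCoupling p {x | x.1 ≠ x.2} ≤ ENNReal.ofReal ((p : ℝ) ^ 2) := by
  rw [ENNReal.le_ofReal_iff_toReal_le (measure_ne_top _ _) (sq_nonneg _), ← measureReal_def]
  set μ := (poissonMeasure (toNNReal p)).prod Ber(false, true, stayProb p)
  set diag : Set (ℕ × Bool) := {0} ×ˢ {false} ∪ {1} ×ˢ Set.univ
  have hsub : (fun x : ℕ × Bool ↦ ((decide (x.1 ≠ 0) || x.2).toNat, x.1)) ⁻¹'
      {x | x.1 ≠ x.2} ⊆ diagᶜ := by
    rintro ⟨n, c⟩ hne (⟨rfl, rfl⟩ | ⟨rfl, -⟩) <;> simp at hne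
  have hdiag : μ.real diag = (1 - p) + p * Real.exp (-p) := by
    rw [measureReal_union (Set.disjoint_prod.mpr (.inl (by simp))) .of_discrete,
      measureReal_prod_prod, measureReal_prod_prod, poissonMeasure_real_singleton,
      poissonMeasure_real_singleton, probReal_univ,
      bernoulliMeasure_real_apply_of_mem_of_notMem _ (.singleton _) rfl (by simp),
      ← exp_neg_mul_stayProb]
    simp [mul_comm]
  calc (bernoulliPoissonCoupling p).real {x | x.1 ≠ x.2} ≤ μ.real diagᶜ := by
        rw [bernoulliPoissonCoupling, map_measureReal_apply .of_discrete .of_discrete]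
        exact measureReal_mono hsub
    _ = p * (1 - Real.exp (-p)) := by
        rw [probReal_compl_eq_one_sub .of_discrete, hdiag]
        ring
    _ ≤ p * p := by
        gcongr
        · exact p.2.1
        · linarith [Real.one_sub_le_exp_neg (p : ℝ)]
    _ = p ^ 2 := (sq _).symm

end ProbabilityTheory

/-- a finite family of independent Bernoulli variables `(I_j)` with
parameters `λ_j ∈ (0,1)` and an independent family of Poisson variables `(P_j)` with
the same means can be coupled so that `P(∃ j, I_j ≠ P_j) ≤ 2·Σ_j λ_j²`. -/
theorem family_poisson_bernoulli_coupling {ι : Type*} [Fintype ι]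
    (lam : ι → ℝ) (hlam : ∀ j, lam j ∈ Set.Ioo (0:ℝ) 1) :
    ∃ μ : Measure ((ι → ℕ) × (ι → ℕ)), IsProbabilityMeasure μ ∧
      -- the first marginal is the product of the Bernoulli(λ_j) laws (as ℕ-valued)
      μ.map Prod.fst = Measure.pi (fun j =>
        ((PMF.bernoulli (lam j).toNNReal
            (Real.toNNReal_le_one.mpr (hlam j).2.le)).map
          (fun b => if b then 1 else 0)).toMeasure) ∧
      -- the second marginal is the product of the Poisson(λ_j) laws
      μ.map Prod.snd = Measure.pi (fun j => poissonMeasure (lam j).toNNReal) ∧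
      μ {q : (ι → ℕ) × (ι → ℕ) | ∃ j, q.1 j ≠ q.2 j} ≤
        ENNReal.ofReal (2 * ∑ j, lam j ^ 2) := by
  let p : ι → I := fun j ↦ ⟨(lam j).toNNReal, (lam j).toNNReal.2,
    NNReal.coe_le_one.2 (Real.toNNReal_le_one.mpr (hlam j).2.le)⟩
  refine ⟨Measure.piCoupling fun j ↦ bernoulliPoissonCoupling (p j), inferInstance, ?_, ?_, ?_⟩
  · simp_rw [Measure.piCoupling_map_fst, map_fst_bernoulliPoissonCoupling,
      PMF.toMeasure_map_bernoulli]
    rfl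
  · simp_rw [Measure.piCoupling_map_snd, map_snd_bernoulliPoissonCoupling]
    rfl
  · calc _ ≤ ∑ j, bernoulliPoissonCoupling (p j) {x | x.1 ≠ x.2} :=
          Measure.piCoupling_exists_mem_le_sum _ fun _ ↦ {x | x.1 ≠ x.2}
      _ ≤ ∑ j, ENNReal.ofReal (lam j ^ 2) := by
          gcongr with j
          have hp : (p j : ℝ) = lam j := Real.coe_toNNReal _ (hlam j).1.le
          exact hp ▸ bernoulliPoissonCoupling_setOf_ne_le (p j)
      _ = ENNReal.ofReal (∑ j, lam j ^ 2) :=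
          (ENNReal.ofReal_sum_of_nonneg fun j _ ↦ sq_nonneg _).symm
      _ ≤ ENNReal.ofReal (2 * ∑ j, lam j ^ 2) :=
          ENNReal.ofReal_le_ofReal <|
            le_mul_of_one_le_left (Finset.sum_nonneg fun j _ ↦ sq_nonneg (lam j)) one_le_two
end

section
/- Let μ > 0, β > 0, p ∈ (1/2,1), and define a_n = log n/W₀(log n) + (C+μ)·log n/(log log n)² with C = 1 + log(βp/(1-p)), where W₀ is the principal Lambert W function. Then a_n·log a_n = log n + (C + μ + o(1))·a_n as n → ∞. -/
open Filter Real Asymptotics Topology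

/-- with `a_n = log n/W₀(log n) + (C+μ)·log n/(log log n)²` where
`C = 1 + log(βp/(1-p))` and `W₀` is the principal Lambert W function, one has
`a_n·log a_n = log n + (C + μ + o(1))·a_n` as `n → ∞`. -/
theorem an_log_an_asymptotics (β p mu : ℝ) (hβ : 0 < β)
    (hp : p ∈ Set.Ioo (1/2 : ℝ) 1) (hmu : 0 < mu)
    (W : ℝ → ℝ)
    (hW : ∀ x : ℝ, -1 ≤ x → W (x * Real.exp x) = x)
    (hW' : ∀ y : ℝ, -(Real.exp 1)⁻¹ ≤ y → W y * Real.exp (W y) = y) :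
    (fun n : ℝ =>
        (Real.log n / W (Real.log n) +
            (1 + Real.log (β * p / (1 - p)) + mu) *
              Real.log n / Real.log (Real.log n) ^ 2) *
          Real.log (Real.log n / W (Real.log n) +
            (1 + Real.log (β * p / (1 - p)) + mu) *
              Real.log n / Real.log (Real.log n) ^ 2) -
        (Real.log n +
          (1 + Real.log (β * p / (1 - p)) + mu) *
            (Real.log n / W (Real.log n) +
              (1 + Real.log (β * p / (1 - p)) + mu) *
                Real.log n / Real.log (Real.log n) ^ 2)))
      =o[atTop] fun n : ℝ =>
        Real.log n / W (Real.log n) +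
          (1 + Real.log (β * p / (1 - p)) + mu) *
            Real.log n / Real.log (Real.log n) ^ 2 := by
  set c : ℝ := 1 + Real.log (β * p / (1 - p)) + mu with hc
  -- basic facts about W
  have hWpos : ∀ y : ℝ, 0 < y → 0 < W y := by
    intro y hy
    have h := hW' y (by nlinarith [inv_pos.mpr (Real.exp_pos 1)])
    nlinarith [Real.exp_pos (W y)]
  have hWtop : Tendsto W atTop atTop := by
    rw [tendsto_atTop]
    intro M
    filter_upwards [eventually_gt_atTop (max 0 (M * Real.exp M))] with y hy
    have hy0 : 0 < y := (le_max_left _ _).trans_lt hy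
    have hW0 := hWpos y hy0
    by_contra h
    push_neg at h
    have hM : 0 < M := hW0.trans h
    have h1 : Real.exp (W y) < Real.exp M := Real.exp_lt_exp.mpr h
    have h2 := hW' y (by nlinarith [inv_pos.mpr (Real.exp_pos 1)])
    have h3 : y < M * Real.exp M := by nlinarith [Real.exp_pos (W y)]
    exact absurd h3 (not_lt.mpr ((le_max_right _ _).trans hy.le))
  have hWeq : ∀ y : ℝ, 0 < y → W y + Real.log (W y) = Real.log y := by
    intro y hy
    have h := hW' y (by nlinarith [inv_pos.mpr (Real.exp_pos 1)])
    have h2 : Real.log (W y * Real.exp (W y)) = Real.log (W y) + W y := by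
      rw [Real.log_mul (hWpos y hy).ne' (Real.exp_ne_zero _), Real.log_exp]
    rw [h] at h2
    linarith
  have hlogdiv : Tendsto (fun x : ℝ => Real.log x / x) atTop (𝓝 0) :=
    Real.isLittleO_log_id_atTop.tendsto_div_nhds_zero
  -- W y / log y → 1
  have hr : Tendsto (fun y => Real.log y / W y) atTop (𝓝 1) := by
    have h0 : Tendsto (fun y => Real.log (W y) / W y) atTop (𝓝 0) := hlogdiv.comp hWtop
    have h1 : Tendsto (fun y => 1 + Real.log (W y) / W y) atTop (𝓝 (1 + 0)) :=
      tendsto_const_nhds.add h0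
    rw [add_zero] at h1
    refine h1.congr' ?_
    filter_upwards [eventually_gt_atTop (0:ℝ), hWtop.eventually_gt_atTop 0] with y hy hW0
    have hwe := hWeq y hy
    field_simp
    linarith
  have hrinv : Tendsto (fun y => W y / Real.log y) atTop (𝓝 1) := by
    have h1 := hr.inv₀ one_ne_zero
    rw [inv_one] at h1
    refine h1.congr fun y => ?_
    rw [inv_div]
  -- u := c W / (log y)² → 0
  have hu : Tendsto (fun y => c * W y / Real.log y ^ 2) atTop (𝓝 0) := by
    have h1 : Tendsto (fun y => c * (W y / Real.log y) * (Real.log y)⁻¹) atTop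
        (𝓝 (c * 1 * 0)) :=
      (tendsto_const_nhds.mul hrinv).mul (tendsto_inv_atTop_zero.comp Real.tendsto_log_atTop)
    rw [mul_zero] at h1
    refine h1.congr fun y => by ring
  have huW : Tendsto (fun y => c * W y / Real.log y ^ 2 * W y) atTop (𝓝 c) := by
    have h1 : Tendsto (fun y => c * (W y / Real.log y) ^ 2) atTop (𝓝 (c * 1 ^ 2)) :=
      tendsto_const_nhds.mul (hrinv.pow 2)
    rw [one_pow, mul_one] at h1
    refine h1.congr fun y => by ring
  -- the limit function
  have hhtend : Tendsto (fun y => c * W y / Real.log y ^ 2 * W y /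
      (1 + c * W y / Real.log y ^ 2)
      + Real.log (1 + c * W y / Real.log y ^ 2) - c) atTop (𝓝 0) := by
    have h1 := huW.div (tendsto_const_nhds.add hu) (by norm_num : (1:ℝ) + 0 ≠ 0)
    have h2 : Tendsto (fun y => Real.log (1 + c * W y / Real.log y ^ 2)) atTop
        (𝓝 (Real.log (1 + 0))) := (tendsto_const_nhds.add hu).log (by norm_num)
    have h3 := (h1.add h2).sub (tendsto_const_nhds : Tendsto (fun _ : ℝ => c) atTop (𝓝 c))
    norm_num at h3
    exact h3
  -- eventual conditions on y
  have hEv : ∀ᶠ y : ℝ in atTop, 1 < y ∧ -(1/2 : ℝ) < c * W y / Real.log y ^ 2 := by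
    filter_upwards [eventually_gt_atTop (1:ℝ),
      hu.eventually (eventually_gt_nhds (by norm_num : -(1/2 : ℝ) < 0))] with y h1 h2
    exact ⟨h1, h2⟩
  have hEvn : ∀ᶠ n : ℝ in atTop,
      1 < Real.log n ∧ -(1/2 : ℝ) < c * W (Real.log n) / Real.log (Real.log n) ^ 2 :=
    Real.tendsto_log_atTop.eventually hEv
  -- eventual positivity of a
  have key : ∀ n : ℝ, 1 < Real.log n →
      -(1/2 : ℝ) < c * W (Real.log n) / Real.log (Real.log n) ^ 2 →
      (Real.log n / W (Real.log n) + c * Real.log n / Real.log (Real.log n) ^ 2)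
        = Real.log n / W (Real.log n)
          * (1 + c * W (Real.log n) / Real.log (Real.log n) ^ 2) := by
    intro n hy hu2
    have hy0 : (0:ℝ) < Real.log n := lt_trans one_pos hy
    have hW0 : 0 < W (Real.log n) := hWpos _ hy0
    have hl0 : 0 < Real.log (Real.log n) := Real.log_pos hy
    field_simp
  have hapos : ∀ᶠ n : ℝ in atTop,
      0 < Real.log n / W (Real.log n) + c * Real.log n / Real.log (Real.log n) ^ 2 := by
    filter_upwards [hEvn] with n hn
    obtain ⟨hy, hu2⟩ := hn
    have hy0 : (0:ℝ) < Real.log n := lt_trans one_pos hy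
    have hW0 : 0 < W (Real.log n) := hWpos _ hy0
    rw [key n hy hu2]
    have : (0:ℝ) < 1 + c * W (Real.log n) / Real.log (Real.log n) ^ 2 := by linarith
    positivity
  rw [Asymptotics.isLittleO_iff_tendsto' (by
    filter_upwards [hapos] with n hn h0
    exact absurd h0 hn.ne')]
  refine Filter.Tendsto.congr' ?_ (hhtend.comp Real.tendsto_log_atTop)
  filter_upwards [hEvn] with n hn
  obtain ⟨hy, hu2⟩ := hn
  set y := Real.log n with hydef
  set Wy := W y with hWydef
  set l := Real.log y with hldef
  have hy0 : (0:ℝ) < y := lt_trans one_pos hy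
  have hW0 : 0 < Wy := hWpos _ hy0
  have hl0 : 0 < l := Real.log_pos hy
  set u : ℝ := c * Wy / l ^ 2 with hudef
  have h1u : (0:ℝ) < 1 + u := by linarith
  have ha : y / Wy + c * y / l ^ 2 = y / Wy * (1 + u) := key n hy hu2
  have hWe : Wy * Real.exp Wy = y := hW' y (by nlinarith [inv_pos.mpr (Real.exp_pos 1)])
  have hexp : Real.exp Wy = y / Wy := by
    rw [eq_div_iff hW0.ne']
    linarith [hWe]
  have hloga : Real.log (y / Wy + c * y / l ^ 2) = Wy + Real.log (1 + u) := by
    rw [ha, Real.log_mul (by positivity) h1u.ne', ← hexp, Real.log_exp]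
  show u * Wy / (1 + u) + Real.log (1 + u) - c
      = ((y / Wy + c * y / l ^ 2) * Real.log (y / Wy + c * y / l ^ 2)
          - (y + c * (y / Wy + c * y / l ^ 2))) / (y / Wy + c * y / l ^ 2)
  rw [hloga, ha]
  have hmain : y / Wy * (1 + u) * (Wy + Real.log (1 + u)) - (y + c * (y / Wy * (1 + u)))
      = (u * Wy / (1 + u) + Real.log (1 + u) - c) * (y / Wy * (1 + u)) := by
    field_simp
    ring
  rw [hmain, mul_div_cancel_right₀ _ (show (y / Wy * (1 + u)) ≠ 0 by positivity)]
end
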